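/- arXiv:1401.2631 — 6 statements merged into one kernel-verified Lean document; each statement's English description precedes it below -/
import Mathlib

section
/- Let $n \ge 1$ and $d \ge 1$ be integers, and let $A = (a_{ij})_{0 \le i,j \le n}$ be an $(n+1)\times(n+1)$ matrix with nonnegative integer entries such that every row sums to $d$, and such that $d^2$ does not divide $\det(A)$. Then there exists a subset $S \subseteq \{0,1,\dots,n\}$ with $|S| \le \lfloor n/2 \rfloor + 1$ such that every row of $A$ has a nonzero entry in some column indexed by $S$ (i.e. for every $i \in \{0,\dots,n\}$ there exists $j \in S$ with $a_{ij} \ne 0$). -/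
/-!
Since `det A ≠ 0`, the columns can be permuted so that the diagonal is nonzero. Then a set `I` of
indices such that the rows in `I` are supported on the columns in `I` splits off a diagonal block
with row sums `d`, whose determinant is divisible by `d`. Two disjoint nonempty such sets would give
`d² ∣ det A`, so they pairwise meet; being closed under intersection, they all contain a common
column `j₀`. The rows avoiding `j₀` satisfy Hall's condition with surplus one, `#J < #N(J)`, and
such a family has a transversal of size at most `#N/2`: an edge with three or more vertices can
lose a vertex without breaking the surplus, because the critical families through that edge are
closed under intersection. A family of pairs with surplus is a forest; take an edge with a leaf and
then drop every edge through its other vertex. Adding `j₀` gives at most `⌊n/2⌋ + 1` columns.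
-/

open Finset Function

namespace Matrix

variable {n R : Type*} [Fintype n] [DecidableEq n] [CommRing R]

theorem exists_perm_forall_ne_zero_of_det_ne_zero {M : Matrix n n R} (h : M.det ≠ 0) :
    ∃ σ : Equiv.Perm n, ∀ i, M i (σ i) ≠ 0 := by
  by_contra! hσ
  refine h ((det_apply M).trans (sum_eq_zero fun σ _ => ?_))
  obtain ⟨i, hi⟩ := hσ σ⁻¹
  rw [prod_eq_zero (mem_univ (σ⁻¹ i)) (by simpa using hi), smul_zero]

theorem dvd_det_of_forall_sum_eq [Nonempty n] {M : Matrix n n R} {z : R}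
    (h : ∀ i, ∑ j, M i j = z) : z ∣ M.det := by
  obtain ⟨j⟩ := ‹Nonempty n›
  have hcol := det_updateCol_sum M j fun _ => 1
  simp only [one_smul, h] at hcol
  rw [← hcol, show (fun _ : n => z) = z • fun _ => (1 : R) by ext; simp, det_updateCol_smul]
  exact dvd_mul_right _ _

omit [DecidableEq n] in
theorem sum_toSquareBlockProp_apply {M : Matrix n n R} {p : n → Prop} [DecidablePred p]
    (i : {a // p a}) (h : ∀ j, ¬p j → M i j = 0) :
    ∑ j, toSquareBlockProp M p i j = ∑ j, M i j := by
  rw [← sum_filter_of_ne fun j _ => not_imp_comm.1 (h j), sum_subtype (p := p) _ (by simp) (M i)]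
  rfl

theorem dvd_det_of_closed_block {M : Matrix n n R} {z : R} (p : n → Prop) [DecidablePred p]
    (hp : ∃ i, p i) (hM : ∀ i, p i → ∀ j, ¬p j → M i j = 0)
    (hsum : ∀ i, p i → ∑ j, M i j = z) : z ∣ M.det := by
  obtain ⟨i, hi⟩ := hp
  have : Nonempty {i // p i} := ⟨⟨i, hi⟩⟩
  rw [twoBlockTriangular_det' M p hM]
  refine (dvd_det_of_forall_sum_eq fun i => ?_).mul_right _
  rw [sum_toSquareBlockProp_apply i (hM i i.2), hsum i i.2]

theorem sq_dvd_det_of_closed_blocks {M : Matrix n n R} {z : R} (p q : n → Prop)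
    [DecidablePred p] [DecidablePred q] (hp : ∃ i, p i) (hq : ∃ i, q i) (hpq : ∀ i, p i → ¬q i)
    (hMp : ∀ i, p i → ∀ j, ¬p j → M i j = 0) (hMq : ∀ i, q i → ∀ j, ¬q j → M i j = 0)
    (hsum : ∀ i, ∑ j, M i j = z) : z ^ 2 ∣ M.det := by
  obtain ⟨i₀, hi₀⟩ := hp
  have : Nonempty {i // p i} := ⟨⟨i₀, hi₀⟩⟩
  rw [twoBlockTriangular_det' M p hMp, sq]
  refine mul_dvd_mul (dvd_det_of_forall_sum_eq fun i => ?_) <|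
    dvd_det_of_closed_block (fun i => q i) ?_ (fun i hi j hj => hMq i hi j hj) fun i hi => ?_
  · rw [sum_toSquareBlockProp_apply i (hMp i i.2), hsum]
  · obtain ⟨i, hi⟩ := hq
    exact ⟨⟨i, fun h => hpq i h hi⟩, hi⟩
  · rw [sum_toSquareBlockProp_apply i fun j hj => hMq i hi j (hpq j (not_not.1 hj)), hsum]

end Matrix

variable {ι α : Type*} [DecidableEq α]

section

variable [DecidableEq ι]

theorem card_biUnion_inter_add_card_biUnion_union_le (s : ι → Finset α) (I J : Finset ι) :
    #((I ∩ J).biUnion s) + #((I ∪ J).biUnion s) ≤ #(I.biUnion s) + #(J.biUnion s) := by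
  rw [union_biUnion, ← card_union_add_card_inter (I.biUnion s), add_comm]
  exact add_le_add_right (card_le_card (subset_inter
    (biUnion_subset_biUnion_of_subset_left s inter_subset_left)
    (biUnion_subset_biUnion_of_subset_left s inter_subset_right))) _

theorem update_erase_subset (s : ι → Finset α) (i : ι) (c : α) (j : ι) :
    update s i ((s i).erase c) j ⊆ s j := by
  rcases eq_or_ne j i with rfl | hj
  · simpa using erase_subset c (s j)
  · simp [hj]

theorem biUnion_subset_biUnion_update_erase {s : ι → Finset α} {J : Finset ι} {i : ι} {c : α}
    (hJ : i ∉ J ∨ c ∈ (J.erase i).biUnion s) :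
    J.biUnion s ⊆ J.biUnion (update s i ((s i).erase c)) := by
  intro x hx
  obtain ⟨j, hj, hxj⟩ := mem_biUnion.1 hx
  rcases eq_or_ne j i with rfl | hji
  · by_cases hxc : x = c
    · obtain ⟨k, hk, hck⟩ := mem_biUnion.1 (hJ.resolve_left (not_not.2 hj))
      exact mem_biUnion.2 ⟨k, mem_of_mem_erase hk, by simpa [ne_of_mem_erase hk, hxc] using hck⟩
    · exact mem_biUnion.2 ⟨j, hj, by simp [hxc, hxj]⟩
  · exact mem_biUnion.2 ⟨j, hj, by simpa [hji] using hxj⟩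

end

def HasSurplus (s : ι → Finset α) (F : Finset ι) : Prop :=
  ∀ J ⊆ F, J.Nonempty → #J < #(J.biUnion s)

namespace HasSurplus

variable {s : ι → Finset α} {F I J : Finset ι}

theorem card_le_card_biUnion (h : HasSurplus s F) (hJ : J ⊆ F) : #J ≤ #(J.biUnion s) := by
  rcases J.eq_empty_or_nonempty with rfl | hne
  · simp
  · exact (h J hJ hne).le

theorem mono (h : HasSurplus s F) (hJ : J ⊆ F) : HasSurplus s J :=
  fun K hK => h K (hK.trans hJ)

theorem exists_private_mem (h : HasSurplus s F) (hF : F.Nonempty) (h2 : ∀ i ∈ F, #(s i) ≤ 2) :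
    ∃ i ∈ F, ∃ b ∈ s i, ∀ j ∈ F, b ∈ s j → j = i := by
  classical
  by_contra! hno
  have hcount := card_mul_le_card_mul (fun b j => b ∈ s j) (s := F.biUnion s) (t := F)
    (m := 2) (n := 2) (fun b hb => ?_) fun j hj => ?_
  · have := h F subset_rfl hF
    omega
  · obtain ⟨i, hi, hbi⟩ := mem_biUnion.1 hb
    obtain ⟨j, hj, hbj, hji⟩ := hno i hi b hbi
    calc 2 = #{j, i} := (card_pair hji).symm
      _ ≤ _ := card_le_card (by simp [insert_subset_iff, mem_bipartiteAbove, *])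
  · exact (card_le_card fun b hb => (mem_filter.1 hb).2).trans (h2 j hj)

theorem exists_cover_of_card_le_two (h : HasSurplus s F) (h2 : ∀ i ∈ F, #(s i) ≤ 2) :
    ∃ C : Finset α, 2 * #C ≤ #(F.biUnion s) ∧ ∀ i ∈ F, ∃ c ∈ C, c ∈ s i := by
  induction F using Finset.strongInduction with
  | H F ih =>
  rcases F.eq_empty_or_nonempty with rfl | hF
  · exact ⟨∅, by simp⟩
  obtain ⟨i, hi, b, hb, hpriv⟩ := h.exists_private_mem hF h2
  have hi2 : 1 < #(s i) := by simpa using h {i} (by simpa) (singleton_nonempty i)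
  obtain ⟨a, ha, hab⟩ := exists_mem_ne hi2 b
  have hF' : F.filter (a ∉ s ·) ⊂ F := filter_ssubset.2 ⟨i, hi, not_not.2 ha⟩
  obtain ⟨C, hC, hcov⟩ := ih _ hF' (h.mono (filter_subset _ _))
    fun j hj => h2 j (mem_of_mem_filter j hj)
  have hN : (F.filter (a ∉ s ·)).biUnion s ⊆ ((F.biUnion s).erase a).erase b := by
    intro x hx
    obtain ⟨j, hj, hxj⟩ := mem_biUnion.1 hx
    obtain ⟨hjF, haj⟩ := mem_filter.1 hj
    refine mem_erase.2 ⟨?_, mem_erase.2 ⟨?_, mem_biUnion.2 ⟨j, hjF, hxj⟩⟩⟩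
    · rintro rfl
      exact haj (hpriv j hjF hxj ▸ ha)
    · rintro rfl
      exact haj hxj
  have haN : a ∈ F.biUnion s := mem_biUnion.2 ⟨i, hi, ha⟩
  have hbN : b ∈ (F.biUnion s).erase a := mem_erase.2 ⟨hab.symm, mem_biUnion.2 ⟨i, hi, hb⟩⟩
  refine ⟨insert a C, ?_, fun j hj => ?_⟩
  · have := card_le_card hN
    have := card_erase_add_one haN
    have := card_erase_add_one hbN
    have := card_insert_le a C
    omega
  · by_cases haj : a ∈ s j
    · exact ⟨a, mem_insert_self a C, haj⟩
    · obtain ⟨c, hc, hcj⟩ := hcov j (mem_filter.2 ⟨hj, haj⟩)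
      exact ⟨c, mem_insert_of_mem hc, hcj⟩

variable [DecidableEq ι]

theorem card_biUnion_inter_le (h : HasSurplus s F) (hI : I ⊆ F) (hJ : J ⊆ F)
    (hIJ : (I ∩ J).Nonempty) (hIs : #(I.biUnion s) ≤ #I + 1) (hJs : #(J.biUnion s) ≤ #J + 1) :
    #((I ∩ J).biUnion s) ≤ #(I ∩ J) + 1 := by
  have := h (I ∪ J) (union_subset hI hJ) (hIJ.mono (inter_subset_left.trans subset_union_left))
  have := card_biUnion_inter_add_card_biUnion_union_le s I J
  have := card_union_add_card_inter I J
  omega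

theorem critical_of_card_biUnion_update_erase_le (h : HasSurplus s F) {i : ι} {c : α}
    (hJ : J ⊆ F) (hJne : J.Nonempty) (hcard : #(J.biUnion (update s i ((s i).erase c))) ≤ #J) :
    i ∈ J ∧ c ∉ (J.erase i).biUnion s ∧ #(J.biUnion s) ≤ #J + 1 := by
  have hlt := h J hJ hJne
  have hback := fun hJ' => (card_le_card (biUnion_subset_biUnion_update_erase hJ')).trans hcard
  refine ⟨by_contra fun hi => ?_, fun hc => ?_, ?_⟩
  · exact absurd (hback (.inl hi)) hlt.not_ge
  · exact absurd (hback (.inr hc)) hlt.not_ge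
  · have hsub : J.biUnion s ⊆ insert c (J.biUnion (update s i ((s i).erase c))) := by
      intro x hx
      obtain ⟨j, hj, hxj⟩ := mem_biUnion.1 hx
      by_cases hxc : x = c
      · exact hxc ▸ mem_insert_self x _
      · refine mem_insert_of_mem (mem_biUnion.2 ⟨j, hj, ?_⟩)
        rcases eq_or_ne j i with rfl | hji <;> simp [*]
    have := card_le_card hsub
    have := card_insert_le c (J.biUnion (update s i ((s i).erase c)))
    omega

theorem card_add_card_le_of_disjoint (h : HasSurplus s F) {i : ι} (hJ : J ⊆ F) (hi : i ∈ J)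
    (hdisj : Disjoint (s i) ((J.erase i).biUnion s)) : #J + #(s i) ≤ #(J.biUnion s) + 1 := by
  have hcard := h.card_le_card_biUnion ((erase_subset i J).trans hJ)
  rw [← insert_erase hi, biUnion_insert, card_union_of_disjoint hdisj, card_insert_of_notMem
    (notMem_erase i J)]
  omega

theorem exists_update_erase (h : HasSurplus s F) {i : ι} (h3 : 2 < #(s i)) :
    ∃ c ∈ s i, HasSurplus (update s i ((s i).erase c)) F := by
  by_contra! hno
  have hcrit : ∀ c ∈ s i, ∃ J, (J ⊆ F ∧ i ∈ J ∧ #(J.biUnion s) ≤ #J + 1) ∧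
      c ∉ (J.erase i).biUnion s := by
    intro c hc
    obtain ⟨J, hJ, hJne, hcard⟩ : ∃ J ⊆ F, J.Nonempty ∧
        #(J.biUnion (update s i ((s i).erase c))) ≤ #J := by
      simpa [HasSurplus] using hno c hc
    obtain ⟨hiJ, hcJ, hJs⟩ := h.critical_of_card_biUnion_update_erase_le hJ hJne hcard
    exact ⟨J, ⟨hJ, hiJ, hJs⟩, hcJ⟩
  choose! K hK hcK using hcrit
  have hne : (s i).Nonempty := card_pos.1 (by omega)
  obtain ⟨hJF, hiJ, hJs⟩ := inf'_mem {J | J ⊆ F ∧ i ∈ J ∧ #(J.biUnion s) ≤ #J + 1}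
    (fun I ⟨hIF, hiI, hIs⟩ J ⟨hJF, hiJ, hJs⟩ => ⟨inter_subset_left.trans hIF,
      mem_inter.2 ⟨hiI, hiJ⟩, h.card_biUnion_inter_le hIF hJF ⟨i, mem_inter.2 ⟨hiI, hiJ⟩⟩ hIs hJs⟩)
    (s i) hne K hK
  have hdisj : Disjoint (s i) ((((s i).inf' hne K).erase i).biUnion s) :=
    disjoint_left.2 fun c hc hcJ => hcK c hc <|
      biUnion_subset_biUnion_of_subset_left s (erase_subset_erase i (inf'_le K hc)) hcJ
  have := h.card_add_card_le_of_disjoint hJF hiJ hdisj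
  omega

theorem exists_subset_card_le_two (h : HasSurplus s F) :
    ∃ t : ι → Finset α, (∀ i, t i ⊆ s i) ∧ HasSurplus t F ∧ ∀ i ∈ F, #(t i) ≤ 2 := by
  induction hm : ∑ i ∈ F, #(s i) using Nat.strong_induction_on generalizing s with
  | _ m ih =>
  by_cases hbig : ∃ i ∈ F, 2 < #(s i)
  · obtain ⟨i, hi, h3⟩ := hbig
    obtain ⟨c, hc, hc'⟩ := h.exists_update_erase h3
    have hlt : ∑ j ∈ F, #(update s i ((s i).erase c) j) < m := hm ▸ sum_lt_sum
      (fun j _ => card_le_card (update_erase_subset s i c j))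
      ⟨i, hi, by simpa using card_erase_lt_of_mem hc⟩
    obtain ⟨t, hts, ht, ht2⟩ := ih _ hlt hc' rfl
    exact ⟨t, fun j => (hts j).trans (update_erase_subset s i c j), ht, ht2⟩
  · push Not at hbig
    exact ⟨s, fun _ => subset_rfl, h, hbig⟩

theorem exists_cover (h : HasSurplus s F) :
    ∃ C : Finset α, 2 * #C ≤ #(F.biUnion s) ∧ ∀ i ∈ F, ∃ c ∈ C, c ∈ s i := by
  obtain ⟨t, hts, ht, ht2⟩ := h.exists_subset_card_le_two
  obtain ⟨C, hC, hcov⟩ := ht.exists_cover_of_card_le_two ht2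
  refine ⟨C, hC.trans (card_le_card (biUnion_mono fun i _ => hts i)), fun i hi => ?_⟩
  obtain ⟨c, hc, hci⟩ := hcov i hi
  exact ⟨c, hc, hts i hci⟩

end HasSurplus

theorem exists_cover_of_closed_inter_nonempty [Fintype ι] [DecidableEq ι]
    [Nonempty ι] {s : ι → Finset ι} (hs : ∀ i, i ∈ s i)
    (hclosed : ∀ I J : Finset ι, I.Nonempty → J.Nonempty → I.biUnion s ⊆ I → J.biUnion s ⊆ J →
      (I ∩ J).Nonempty) :
    ∃ C : Finset ι, 2 * #C ≤ Fintype.card ι + 1 ∧ ∀ i, ∃ c ∈ C, c ∈ s i := by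
  classical
  let 𝒦 : Set (Finset ι) := {I | I.Nonempty ∧ I.biUnion s ⊆ I}
  have h𝒦 : ∀ I ∈ 𝒦, ∀ J ∈ 𝒦, I ⊓ J ∈ 𝒦 := fun I ⟨hI, hIs⟩ J ⟨hJ, hJs⟩ =>
    ⟨hclosed I J hI hJ hIs hJs, biUnion_subset.2 fun i hi =>
      subset_inter ((subset_biUnion_of_mem s (mem_of_mem_inter_left hi)).trans hIs)
        ((subset_biUnion_of_mem s (mem_of_mem_inter_right hi)).trans hJs)⟩
  have hne : (univ.filter (· ∈ 𝒦)).Nonempty :=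
    ⟨univ, mem_filter.2 ⟨mem_univ _, univ_nonempty, subset_univ _⟩⟩
  obtain ⟨⟨j₀, hj₀⟩, -⟩ := inf'_mem 𝒦 h𝒦 _ hne id fun I hI => (mem_filter.1 hI).2
  have hj₀𝒦 : ∀ I ∈ 𝒦, j₀ ∈ I := fun I hI => inf'_le id (mem_filter.2 ⟨mem_univ I, hI⟩) hj₀
  have hR : HasSurplus s (univ.filter (j₀ ∉ s ·)) := by
    intro J hJ hJne
    by_contra! hcard
    have hJs : J.biUnion s = J :=
      eq_of_superset_of_card_ge (fun i hi => mem_biUnion.2 ⟨i, hi, hs i⟩) hcard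
    obtain ⟨-, hj₀⟩ := mem_filter.1 (hJ (hj₀𝒦 J ⟨hJne, hJs.le⟩))
    exact hj₀ (hs j₀)
  obtain ⟨C, hC, hcov⟩ := hR.exists_cover
  have hNR : (univ.filter (j₀ ∉ s ·)).biUnion s ⊆ univ.erase j₀ := fun x hx => by
    obtain ⟨j, hj, hxj⟩ := mem_biUnion.1 hx
    exact mem_erase.2 ⟨fun h => (mem_filter.1 hj).2 (h ▸ hxj), mem_univ x⟩
  refine ⟨insert j₀ C, ?_, fun i => ?_⟩
  · have := card_le_card hNR
    have hcard := card_erase_add_one (mem_univ j₀)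
    have := card_insert_le j₀ C
    rw [card_univ] at hcard
    omega
  · by_cases hi : j₀ ∈ s i
    · exact ⟨j₀, mem_insert_self j₀ C, hi⟩
    · obtain ⟨c, hc, hci⟩ := hcov i (mem_filter.2 ⟨mem_univ i, hi⟩)
      exact ⟨c, mem_insert_of_mem hc, hci⟩

theorem exists_small_column_cover_general (n d : ℕ)
    (A : Matrix (Fin (n + 1)) (Fin (n + 1)) ℕ)
    (hrow : ∀ i, ∑ j, A i j = d)
    (hdet : ¬ ((d : ℤ) ^ 2 ∣ (A.map (fun a => (a : ℤ))).det)) :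
    ∃ S : Finset (Fin (n + 1)), S.card ≤ n / 2 + 1 ∧
      ∀ i, ∃ j ∈ S, A i j ≠ 0 := by
  set B := A.map (fun a => (a : ℤ))
  obtain ⟨σ, hσ⟩ := Matrix.exists_perm_forall_ne_zero_of_det_ne_zero fun h => hdet (h ▸ dvd_zero _)
  set M := B.submatrix id σ
  have hsum : ∀ i, ∑ j, M i j = d := fun i => by
    simp only [M, B, Matrix.submatrix_apply, Matrix.map_apply, id]
    rw [Equiv.sum_comp σ fun j => (A i j : ℤ), ← Nat.cast_sum, hrow]
  have hzero : ∀ K : Finset (Fin (n + 1)), K.biUnion (fun i => univ.filter (M i · ≠ 0)) ⊆ K →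
      ∀ i ∈ K, ∀ j ∉ K, M i j = 0 := fun K hK i hi j hj =>
    by_contra fun h => hj (hK (mem_biUnion.2 ⟨i, hi, mem_filter.2 ⟨mem_univ j, h⟩⟩))
  obtain ⟨C, hC, hcov⟩ := exists_cover_of_closed_inter_nonempty
    (s := fun i => univ.filter (M i · ≠ 0)) (fun i => mem_filter.2 ⟨mem_univ i, hσ i⟩)
    fun I J hI hJ hIs hJs => by
      by_contra hIJ
      refine hdet ((Units.dvd_mul_left (u := Equiv.Perm.sign σ)).1 ?_)
      rw [← Int.cast_id (n := ((Equiv.Perm.sign σ : ℤˣ) : ℤ)), ← Matrix.det_permute']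
      exact Matrix.sq_dvd_det_of_closed_blocks (· ∈ I) (· ∈ J) hI hJ
        (fun i hi hj => hIJ ⟨i, mem_inter.2 ⟨hi, hj⟩⟩) (hzero I hIs) (hzero J hJs) hsum
  refine ⟨C.map σ.toEmbedding, ?_, fun i => ?_⟩
  · rw [card_map]
    simp only [Fintype.card_fin] at hC
    omega
  · obtain ⟨c, hc, hci⟩ := hcov i
    exact ⟨σ c, mem_map_equiv.2 (by simpa using hc), by simpa [M, B] using hci⟩

/-- Combinatorial core of Theorem 2: if `A` is an `(n+1) × (n+1)` matrix with nonnegative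
integer entries, all row sums equal to `d ≥ 1`, and `d²` does not divide `det A`, then there
is a set `S` of at most `⌊n/2⌋ + 1` columns meeting the support of every row. -/
theorem exists_small_column_cover (n d : ℕ) (hn : 1 ≤ n) (hd : 1 ≤ d)
    (A : Matrix (Fin (n + 1)) (Fin (n + 1)) ℕ)
    (hrow : ∀ i, ∑ j, A i j = d)
    (hdet : ¬ ((d : ℤ) ^ 2 ∣ (A.map (fun a => (a : ℤ))).det)) :
    ∃ S : Finset (Fin (n + 1)), S.card ≤ n / 2 + 1 ∧
      ∀ i, ∃ j ∈ S, A i j ≠ 0 :=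
  exists_small_column_cover_general n d A hrow hdet
end

section
/- Let $k$ be a field, let $n \ge 1$ and $d \ge 1$ be integers, and let $A = (a_{ij})_{0 \le i,j \le n}$ be an $(n+1)\times(n+1)$ matrix with nonnegative integer entries such that every row sums to $d$ and such that $d^2$ does not divide $\det(A)$. For each $i$, let $f_i = \prod_{j=0}^n X_j^{a_{ij}}$ be the corresponding monomial in the polynomial ring $k[X_0,\dots,X_n]$. Then there exists a subset $S \subseteq \{0,1,\dots,n\}$ with $|S| \le \lfloor n/2 \rfloor + 1$ such that every $f_i$ lies in the ideal of $k[X_0,\dots,X_n]$ generated by the variables $\{X_j : j \in S\}$. -/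
open Matrix

/-- If every row of an integer square matrix sums to `d`, then `d ∣ det`. -/
lemma dvd_det_of_row_sum {m : Type*} [Fintype m] [DecidableEq m] [Nonempty m]
    (M : Matrix m m ℤ) (d : ℕ) (h : ∀ i, ∑ j, M i j = (d : ℤ)) :
    (d : ℤ) ∣ M.det := by
  rcases Nat.eq_zero_or_pos d with hd | hd
  · subst hd
    have h1 : M *ᵥ (fun _ => 1) = 0 := by
      funext i
      simp only [Matrix.mulVec, dotProduct, mul_one]
      simpa using h i
    have := congrArg (fun v => (M.adjugate *ᵥ v)) h1
    simp only [Matrix.mulVec_mulVec, Matrix.adjugate_mul, Matrix.mulVec_zero] at this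
    have h2 := congrFun this (Classical.arbitrary m)
    simp only [Matrix.smul_mulVec, Matrix.one_mulVec, Pi.smul_apply, smul_eq_mul,
      mul_one, Pi.zero_apply] at h2
    simp [h2]
  · haveI : NeZero d := ⟨hd.ne'⟩
    set M' := M.map (Int.cast : ℤ → ZMod d) with hM'
    have h1 : M' *ᵥ (fun _ => 1) = 0 := by
      funext i
      simp only [Matrix.mulVec, dotProduct, mul_one, hM', Matrix.map_apply]
      rw [← Int.cast_sum, h i]
      simp
    have := congrArg (fun v => (M'.adjugate *ᵥ v)) h1
    simp only [Matrix.mulVec_mulVec, Matrix.adjugate_mul, Matrix.mulVec_zero] at this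
    have h2 := congrFun this (Classical.arbitrary m)
    simp only [Matrix.smul_mulVec, Matrix.one_mulVec, Pi.smul_apply, smul_eq_mul,
      mul_one, Pi.zero_apply] at h2
    have hdet : ((Int.castRingHom (ZMod d)) M.det) = 0 := by
      rw [RingHom.map_det]
      have : (Int.castRingHom (ZMod d)).mapMatrix M = M' := by
        ext i j; simp [hM', RingHom.mapMatrix_apply]
      rw [this]; exact h2
    exact (ZMod.intCast_zmod_eq_zero_iff_dvd _ d).mp hdet

/-- Block-triangular determinant split: if all rows indexed by `C` vanish outside `C`,
the determinant factors. -/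
lemma det_split {m : Type*} [Fintype m] [DecidableEq m]
    (M : Matrix m m ℤ) (C : Finset m)
    (h : ∀ i ∈ C, ∀ j, j ∉ C → M i j = 0) :
    M.det = (M.submatrix (Subtype.val : {x // x ∈ C} → m) Subtype.val).det *
      (M.submatrix (Subtype.val : {x // ¬ x ∈ C} → m) Subtype.val).det := by
  classical
  set e := Equiv.sumCompl (fun x => x ∈ C) with he
  have h0 : M.det = (M.submatrix e e).det := (Matrix.det_submatrix_equiv_self e M).symm
  have hblock : M.submatrix (e : _ → m) (e : _ → m) =
      Matrix.fromBlocks (M.submatrix (Subtype.val : {x // x ∈ C} → m) Subtype.val) 0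
        (M.submatrix (Subtype.val : {x // ¬ x ∈ C} → m)
          (Subtype.val : {x // x ∈ C} → m))
        (M.submatrix (Subtype.val : {x // ¬ x ∈ C} → m) Subtype.val) := by
    ext i j
    rcases i with i | i <;> rcases j with j | j <;>
      simp [he, Matrix.fromBlocks, Matrix.submatrix, Equiv.sumCompl]
    · exact h i.1 i.2 j.1 j.2
  rw [h0, hblock, Matrix.det_fromBlocks_zero₁₂]

/-- Pairing induction: a rank-decreasing (partial) map on `W` admits an
"independent" subset of at least half the size. -/
lemma exists_indep {α : Type*} [DecidableEq α] (f : α → α) (ρ : α → ℕ) :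
    ∀ (W : Finset α), (∀ v ∈ W, ρ (f v) < ρ v) →
    ∃ I : Finset α, I ⊆ W ∧ W.card ≤ 2 * I.card ∧ ∀ v ∈ I, f v ∉ I := by
  intro W
  induction W using Finset.strongInduction with
  | _ W ih =>
    intro hW
    rcases W.eq_empty_or_nonempty with rfl | hne
    · exact ⟨∅, by simp⟩
    obtain ⟨v, hv, hmax⟩ := W.exists_max_image ρ hne
    set W' := (W.erase v).erase (f v) with hW'
    have hW'sub : W' ⊂ W := by
      apply Finset.ssubset_of_subset_of_ssubset (Finset.erase_subset _ _)
      exact Finset.erase_ssubset hv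
    obtain ⟨I', hI'sub, hI'card, hI'ind⟩ := ih W' hW'sub (fun w hw =>
      hW w (Finset.mem_of_mem_erase (Finset.mem_of_mem_erase hw)))
    have hvnotI' : v ∉ I' := fun hmem =>
      (Finset.notMem_erase v _) (Finset.mem_of_mem_erase (hI'sub hmem))
    have hfvnotI' : f v ∉ I' := fun hmem => (Finset.notMem_erase (f v) _) (hI'sub hmem)
    refine ⟨insert v I', ?_, ?_, ?_⟩
    · intro x hx
      rcases Finset.mem_insert.mp hx with rfl | hx
      · exact hv
      · exact Finset.mem_of_mem_erase (Finset.mem_of_mem_erase (hI'sub hx))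
    · have hcard : W.card ≤ W'.card + 2 := by
        have h1 : (W.erase v).card = W.card - 1 := Finset.card_erase_of_mem hv
        have h2 : W'.card ≥ (W.erase v).card - 1 := by
          rw [hW']
          rcases em (f v ∈ W.erase v) with hh | hh
          · rw [Finset.card_erase_of_mem hh]
          · rw [Finset.erase_eq_of_notMem hh]; omega
        have h3 : 1 ≤ W.card := Finset.card_pos.mpr hne
        omega
      rw [Finset.card_insert_of_notMem hvnotI']
      omega
    · intro x hx
      rcases Finset.mem_insert.mp hx with rfl | hx
      · -- f x = f v ∉ insert v I'
        intro hmem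
        rcases Finset.mem_insert.mp hmem with heq | hmem
        · have h1 := hW x hv
          rw [heq] at h1
          omega
        · exact hfvnotI' hmem
      · intro hmem
        rcases Finset.mem_insert.mp hmem with heq | hmem
        · -- f x = v, but ρ v maximal and ρ (f x) < ρ x ≤ ρ v
          have hxW : x ∈ W := Finset.mem_of_mem_erase (Finset.mem_of_mem_erase (hI'sub hx))
          have h1 := hW x hxW
          have h2 := hmax x hxW
          rw [heq] at h1
          omega
        · exact hI'ind x hx hmem

section ReachMachinery

variable {α : Type*} [Fintype α] [DecidableEq α]

/-- One-step expansion of a vertex set along `F`. -/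
def expandSet (F : α → Finset α) (X : Finset α) : Finset α := X.biUnion F

/-- Iterated expansion. -/
def reachN (F : α → Finset α) : ℕ → Finset α → Finset α
  | 0, X => X
  | (k+1), X => expandSet F (reachN F k X)

lemma subset_expandSet (F : α → Finset α) (hF : ∀ v, v ∈ F v) (X : Finset α) :
    X ⊆ expandSet F X := fun x hx => Finset.mem_biUnion.mpr ⟨x, hx, hF x⟩

lemma expandSet_mono (F : α → Finset α) {X Y : Finset α} (h : X ⊆ Y) :
    expandSet F X ⊆ expandSet F Y := Finset.biUnion_subset_biUnion_of_subset_left _ h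

lemma reachN_mono (F : α → Finset α) {X Y : Finset α} (h : X ⊆ Y) (k : ℕ) :
    reachN F k X ⊆ reachN F k Y := by
  induction k with
  | zero => exact h
  | succ k ih => exact expandSet_mono F ih

lemma subset_reachN (F : α → Finset α) (hF : ∀ v, v ∈ F v) (X : Finset α) (k : ℕ) :
    X ⊆ reachN F k X := by
  induction k with
  | zero => exact fun x hx => hx
  | succ k ih => exact ih.trans (subset_expandSet F hF _)

lemma reachN_le_succ (F : α → Finset α) (hF : ∀ v, v ∈ F v) (X : Finset α) (k : ℕ) :
    reachN F k X ⊆ reachN F (k+1) X := subset_expandSet F hF _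

/-- If an iteration step fixes the set, all later iterations agree. -/
lemma reachN_fixed (F : α → Finset α) (X : Finset α) {k : ℕ}
    (h : reachN F (k+1) X = reachN F k X) :
    ∀ l, k ≤ l → reachN F l X = reachN F k X := by
  intro l hl
  induction l with
  | zero =>
    have : k = 0 := by omega
    subst this
    rfl
  | succ l ih =>
    rcases Nat.eq_or_lt_of_le hl with heq | hlt
    · rw [← heq]
    · have h1 : k ≤ l := by omega
      have := ih h1
      show expandSet F (reachN F l X) = _
      rw [this]
      exact h

/-- The expansion stabilizes after `Fintype.card α` steps. -/
lemma reachN_stable (F : α → Finset α) (hF : ∀ v, v ∈ F v) (u : α) :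
    reachN F (Fintype.card α + 1) {u} = reachN F (Fintype.card α) {u} := by
  classical
  by_contra hne
  -- then all steps k ≤ card α strictly increase
  have hgrow : ∀ k, k ≤ Fintype.card α → k + 1 ≤ (reachN F k {u}).card := by
    intro k
    induction k with
    | zero =>
      intro _
      simp [reachN]
    | succ k ih =>
      intro hk
      have hk' : k ≤ Fintype.card α := by omega
      have h1 := ih hk'
      have hsub := reachN_le_succ F hF {u} k
      have hne' : reachN F (k+1) {u} ≠ reachN F k {u} := by
        intro h
        exact hne (reachN_fixed F {u} h (Fintype.card α + 1) (by omega) ▸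
          (reachN_fixed F {u} h (Fintype.card α) (by omega)).symm ▸ rfl)
      have hssub : reachN F k {u} ⊂ reachN F (k+1) {u} :=
        Finset.ssubset_iff_subset_ne.mpr ⟨hsub, fun h => hne' h.symm⟩
      have := Finset.card_lt_card hssub
      omega
    
  have h2 := hgrow (Fintype.card α) le_rfl
  have h3 : (reachN F (Fintype.card α) {u}).card ≤ Fintype.card α :=
    Finset.card_le_univ _
  omega

/-- Reachability set of `u`. -/
def ReachSet (F : α → Finset α) (u : α) : Finset α := reachN F (Fintype.card α) {u}

lemma mem_ReachSet_self (F : α → Finset α) (hF : ∀ v, v ∈ F v) (u : α) :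
    u ∈ ReachSet F u :=
  subset_reachN F hF {u} _ (Finset.mem_singleton_self u)

lemma ReachSet_closed (F : α → Finset α) (hF : ∀ v, v ∈ F v) (u : α) :
    ∀ x ∈ ReachSet F u, F x ⊆ ReachSet F u := by
  intro x hx
  have h : expandSet F (ReachSet F u) = ReachSet F u := reachN_stable F hF u
  intro y hy
  rw [← h]
  exact Finset.mem_biUnion.mpr ⟨x, hx, hy⟩

/-- reachN stays inside any closed superset. -/
lemma reachN_subset_closed (F : α → Finset α) {C : Finset α}
    (hC : ∀ x ∈ C, F x ⊆ C) {X : Finset α} (hX : X ⊆ C) (k : ℕ) :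
    reachN F k X ⊆ C := by
  induction k with
  | zero => exact hX
  | succ k ih =>
    intro y hy
    obtain ⟨x, hx, hxy⟩ := Finset.mem_biUnion.mp hy
    exact hC x (ih hx) hxy

lemma ReachSet_trans (F : α → Finset α) (hF : ∀ v, v ∈ F v) {u x : α}
    (hx : x ∈ ReachSet F u) : ReachSet F x ⊆ ReachSet F u :=
  reachN_subset_closed F (ReachSet_closed F hF u) (Finset.singleton_subset_iff.mpr hx) _

lemma reachN_succ_inner (F : α → Finset α) (k : ℕ) (X : Finset α) :
    reachN F (k+1) X = reachN F k (expandSet F X) := by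
  induction k with
  | zero => rfl
  | succ k ih =>
    show expandSet F (reachN F (k+1) X) = _
    rw [ih]
    rfl

lemma reachN_biUnion (F : α → Finset α) (k : ℕ) (X : Finset α) :
    reachN F k X = X.biUnion (fun w => reachN F k {w}) := by
  induction k generalizing X with
  | zero =>
    ext x
    simp [reachN]
  | succ k ih =>
    show expandSet F (reachN F k X) = _
    rw [ih]
    ext y
    constructor
    · intro hy
      obtain ⟨w, hw, hy⟩ := Finset.mem_biUnion.mp hy
      obtain ⟨x, hx, hwx⟩ := Finset.mem_biUnion.mp hw
      refine Finset.mem_biUnion.mpr ⟨x, hx, ?_⟩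
      show y ∈ expandSet F (reachN F k {x})
      exact Finset.mem_biUnion.mpr ⟨w, hwx, hy⟩
    · intro hy
      obtain ⟨x, hx, hy⟩ := Finset.mem_biUnion.mp hy
      have hy' : y ∈ expandSet F (reachN F k {x}) := hy
      obtain ⟨w, hw, hy⟩ := Finset.mem_biUnion.mp hy'
      exact Finset.mem_biUnion.mpr ⟨w, Finset.mem_biUnion.mpr ⟨x, hx, hw⟩, hy⟩

end ReachMachinery

section Dichotomy

variable {α : Type*} [Fintype α] [DecidableEq α] [Nonempty α]

/-- Either two reachability sets are disjoint, or there is a vertex `u₀` reachable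
from everywhere, yielding a rank-decreasing parent map. -/
lemma reach_dichotomy (F : α → Finset α) (hF : ∀ v, v ∈ F v) :
    (∃ u w : α, Disjoint (ReachSet F u) (ReachSet F w)) ∨
    (∃ (u₀ : α) (f : α → α) (ρ : α → ℕ),
      ∀ v, v ≠ u₀ → f v ∈ F v ∧ f v ≠ v ∧ ρ (f v) < ρ v) := by
  classical
  by_cases hdisj : ∃ u w : α, Disjoint (ReachSet F u) (ReachSet F w)
  · exact Or.inl hdisj
  push_neg at hdisj
  right
  -- pick u₀ with minimal reach set
  obtain ⟨u₀, _, hu₀min⟩ := Finset.exists_min_image (Finset.univ : Finset α)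
    (fun u => (ReachSet F u).card) ⟨Classical.arbitrary α, Finset.mem_univ _⟩
  -- every vertex reaches u₀
  have hreach : ∀ u, u₀ ∈ ReachSet F u := by
    intro u
    have hnd := hdisj u u₀
    rw [Finset.not_disjoint_iff] at hnd
    obtain ⟨x, hxu, hxu₀⟩ := hnd
    have h1 : ReachSet F x ⊆ ReachSet F u₀ := ReachSet_trans F hF hxu₀
    have h2 : (ReachSet F u₀).card ≤ (ReachSet F x).card := hu₀min x (Finset.mem_univ _)
    have h3 : ReachSet F x = ReachSet F u₀ := Finset.eq_of_subset_of_card_le h1 h2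
    have h4 : u₀ ∈ ReachSet F x := by
      rw [h3]
      exact mem_ReachSet_self F hF u₀
    exact ReachSet_trans F hF hxu h4
  -- distance function
  have hex : ∀ u : α, ∃ k, u₀ ∈ reachN F k {u} := fun u => ⟨Fintype.card α, hreach u⟩
  have hstep : ∀ v, v ≠ u₀ →
      ∃ w, w ∈ F v ∧ w ≠ v ∧ Nat.find (hex w) < Nat.find (hex v) := by
    intro v hv
    have h1 : 0 < Nat.find (hex v) := by
      rw [Nat.find_pos]
      simp only [reachN, Finset.mem_singleton]
      exact fun h => hv h.symm
    have hspec : u₀ ∈ reachN F (Nat.find (hex v)) {v} := Nat.find_spec (hex v)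
    obtain ⟨k, hk⟩ : ∃ k, Nat.find (hex v) = k + 1 := ⟨Nat.find (hex v) - 1, by omega⟩
    rw [hk, reachN_succ_inner] at hspec
    have hexp : expandSet F {v} = F v := Finset.singleton_biUnion
    rw [hexp, reachN_biUnion] at hspec
    obtain ⟨w, hw, hw2⟩ := Finset.mem_biUnion.mp hspec
    refine ⟨w, hw, ?_, ?_⟩
    · intro hwv
      rw [hwv] at hw2
      have := Nat.find_min' (hex v) hw2
      omega
    · have h2 : Nat.find (hex w) ≤ k := Nat.find_min' (hex w) hw2
      omega
  refine ⟨u₀, fun v => if h : v = u₀ then v else Classical.choose (hstep v h),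
    fun u => Nat.find (hex u), ?_⟩
  intro v hv
  simp only [dif_neg hv]
  obtain ⟨h1, h2, h3⟩ := Classical.choose_spec (hstep v hv)
  exact ⟨h1, h2, h3⟩

end Dichotomy

/-- If strictly more than `|C|` rows are supported inside the column set `C`,
the determinant vanishes. -/
lemma det_eq_zero_of_fat {m : Type*} [Fintype m] [DecidableEq m] (M : Matrix m m ℤ)
    (R C : Finset m) (hcard : C.card < R.card)
    (hsupp : ∀ i ∈ R, ∀ j, j ∉ C → M i j = 0) : M.det = 0 := by
  classical
  set Mq := M.map (Int.cast : ℤ → ℚ) with hMq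
  have hdetq : Mq.det = 0 := by
    rw [← Matrix.exists_vecMul_eq_zero_iff]
    -- rows of R as vectors on C-coordinates
    set b : {x // x ∈ R} → ({x // x ∈ C} → ℚ) := fun i c => Mq i.1 c.1 with hb
    have hnli : ¬ LinearIndependent ℚ b := by
      intro hli
      have h1 := hli.fintype_card_le_finrank
      rw [Module.finrank_pi] at h1
      simp only [Fintype.card_coe] at h1
      omega
    obtain ⟨g, hg, i₀, hgi₀⟩ := Fintype.not_linearIndependent_iff.mp hnli
    set v : m → ℚ := fun i => if h : i ∈ R then g ⟨i, h⟩ else 0 with hv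
    refine ⟨v, ?_, ?_⟩
    · intro hv0
      apply hgi₀
      have := congrFun hv0 i₀.1
      simpa [hv, i₀.2] using this
    · funext j
      show ∑ i, v i * Mq i j = 0
      have hstep : ∑ i, v i * Mq i j = ∑ i ∈ R, v i * Mq i j :=
        (Finset.sum_subset (Finset.subset_univ R) (fun x _ hx => by
          simp [hv, dif_neg hx])).symm
      rw [hstep, ← Finset.sum_attach R (fun i => v i * Mq i j)]
      have hstep2 : ∀ i : {x // x ∈ R}, v i.1 * Mq i.1 j = g i * Mq i.1 j := by
        intro i
        simp [hv, i.2]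
      rw [Finset.sum_congr rfl (fun i _ => hstep2 i)]
      by_cases hj : j ∈ C
      · have := congrFun hg ⟨j, hj⟩
        simpa [hb, Finset.sum_apply] using this
      · have : ∀ i : {x // x ∈ R}, Mq i.1 j = 0 := by
          intro i
          simp [hMq, hsupp i.1 i.2 j hj]
        simp [this]
  have : ((Int.castRingHom ℚ) M.det) = 0 := by
    rw [RingHom.map_det]
    have heq : (Int.castRingHom ℚ).mapMatrix M = Mq := by
      ext i j; simp [hMq, RingHom.mapMatrix_apply]
    rw [heq]; exact hdetq
  have h2 : ((M.det : ℤ) : ℚ) = 0 := this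
  exact_mod_cast h2

/-- Combinatorial/determinant core: either a small transversal exists, or `d² ∣ det`. -/
lemma core_dichotomy (n d : ℕ) (hd : 1 ≤ d)
    (A : Matrix (Fin (n + 1)) (Fin (n + 1)) ℕ)
    (hrow : ∀ i, ∑ j, A i j = d) :
    (∃ T : Finset (Fin (n + 1)), T.card ≤ n / 2 + 1 ∧ ∀ i, ∃ j ∈ T, A i j ≠ 0) ∨
    ((d : ℤ) ^ 2 ∣ (A.map (fun a => (a : ℤ))).det) := by
  classical
  set Az := A.map (fun a => (a : ℤ)) with hAz
  set S : Fin (n+1) → Finset (Fin (n+1)) := fun i => Finset.univ.filter (fun j => A i j ≠ 0)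
    with hS
  have hAzA : ∀ i j, Az i j = 0 ↔ A i j = 0 := by
    intro i j
    simp [hAz]
  have hmemS : ∀ i j, j ∈ S i ↔ A i j ≠ 0 := by
    intro i j
    simp [hS]
  -- fat case
  by_cases hfat : ∃ R C : Finset (Fin (n+1)), C.card < R.card ∧
      ∀ i ∈ R, ∀ j, j ∉ C → A i j = 0
  · obtain ⟨R, C, hcard, hsupp⟩ := hfat
    right
    have h0 : Az.det = 0 := det_eq_zero_of_fat Az R C hcard (fun i hi j hj => by
      rw [hAzA]; exact hsupp i hi j hj)
    rw [h0]
    exact dvd_zero _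
  -- Hall's condition
  have hHall : ∀ s : Finset (Fin (n+1)), s.card ≤ (s.biUnion S).card := by
    intro s
    by_contra hcon
    push_neg at hcon
    exact hfat ⟨s, s.biUnion S, hcon, fun i hi j hj => by
      by_contra hne
      exact hj (Finset.mem_biUnion.mpr ⟨i, hi, (hmemS i j).mpr hne⟩)⟩
  obtain ⟨fh, hfinj, hfmem⟩ := (Finset.all_card_le_biUnion_card_iff_exists_injective S).mp hHall
  set σ : Fin (n+1) ≃ Fin (n+1) := Equiv.ofBijective fh (Finite.injective_iff_bijective.mp hfinj)
    with hσ
  have hσa : ∀ i, (σ : Fin (n+1) → Fin (n+1)) i = fh i := fun i => rfl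
  set F : Fin (n+1) → Finset (Fin (n+1)) := fun v => S (σ.symm v) with hF
  have hFv : ∀ v, v ∈ F v := by
    intro v
    have h1 : fh (σ.symm v) ∈ S (σ.symm v) := hfmem (σ.symm v)
    have h2 : fh (σ.symm v) = v := by
      rw [← hσa]
      exact σ.apply_symm_apply v
    show v ∈ S (σ.symm v)
    rwa [h2] at h1
  -- row support of the permuted matrix
  set B := Az.submatrix (⇑σ.symm) id with hB
  have hBsupp : ∀ v j, j ∉ F v → B v j = 0 := by
    intro v j hj
    show Az (σ.symm v) j = 0
    rw [hAzA]
    by_contra hne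
    exact hj ((hmemS _ j).mpr hne)
  have hBrowsum : ∀ v, ∑ j, B v j = (d : ℤ) := by
    intro v
    show ∑ j, ((A (σ.symm v) j : ℕ) : ℤ) = (d : ℤ)
    rw [← Nat.cast_sum, hrow]
  have key : (d:ℤ)^2 ∣ B.det → (d:ℤ)^2 ∣ Az.det := by
    intro hdvd
    have h1 := Matrix.det_permute σ.symm Az
    rw [show (Az.submatrix (⇑σ.symm) id) = B from rfl] at h1
    rcases Int.units_eq_one_or (Equiv.Perm.sign σ.symm) with h | h <;> rw [h] at h1 <;>
      simp at h1
    · rwa [← h1]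
    · have h2 : Az.det = -B.det := by
        rw [h1]; ring
      rw [h2]
      exact dvd_neg.mpr hdvd
  rcases reach_dichotomy F hFv with ⟨u, w, hdisj⟩ | ⟨u₀, f, ρ, hstep⟩
  · -- two disjoint closed sets: d² divides det
    right
    set C₁ := ReachSet F u with hC₁
    set C₂ := ReachSet F w with hC₂
    have hC₁closed := ReachSet_closed F hFv u
    have hC₂closed := ReachSet_closed F hFv w
    have hsupp₁ : ∀ i ∈ C₁, ∀ j, j ∉ C₁ → B i j = 0 := by
      intro i hi j hj
      exact hBsupp i j (fun hmem => hj (hC₁closed i hi hmem))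
    have hsplit1 := det_split B C₁ hsupp₁
    haveI hne₁ : Nonempty {x // x ∈ C₁} := ⟨⟨u, mem_ReachSet_self F hFv u⟩⟩
    have hdvd1 : (d : ℤ) ∣ (B.submatrix (Subtype.val : {x // x ∈ C₁} → Fin (n+1))
        Subtype.val).det := by
      apply dvd_det_of_row_sum _ d
      intro i
      show ∑ j : {x // x ∈ C₁}, B i.1 j.1 = (d : ℤ)
      refine Eq.trans (Finset.sum_coe_sort C₁ (fun j => B i.1 j)) ?_
      rw [Finset.sum_subset (Finset.subset_univ C₁) (fun j _ hj => hsupp₁ i.1 i.2 j hj)]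
      exact hBrowsum i.1
    -- second factor: submatrix on the complement of C₁
    set Z := B.submatrix (Subtype.val : {x : Fin (n+1) // ¬ x ∈ C₁} → Fin (n+1))
      Subtype.val with hZ
    set C₂' : Finset {x : Fin (n+1) // ¬ x ∈ C₁} := C₂.subtype (fun x => ¬ x ∈ C₁) with hC₂'
    have hmemC₂' : ∀ x : {x : Fin (n+1) // ¬ x ∈ C₁}, x ∈ C₂' ↔ x.1 ∈ C₂ := by
      intro x
      simp [hC₂']
    have hwC₂ : w ∈ C₂ := mem_ReachSet_self F hFv w
    have hwnotC₁ : ¬ w ∈ C₁ := fun hmem => (Finset.disjoint_left.mp hdisj) hmem hwC₂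
    haveI hne₂ : Nonempty {x // x ∈ C₂'} := ⟨⟨⟨w, hwnotC₁⟩, (hmemC₂' _).mpr hwC₂⟩⟩
    have hsupp₂ : ∀ i ∈ C₂', ∀ j, j ∉ C₂' → Z i j = 0 := by
      intro i hi j hj
      show B i.1 j.1 = 0
      apply hBsupp
      intro hmem
      have h1 : j.1 ∈ C₂ := hC₂closed i.1 ((hmemC₂' i).mp hi) hmem
      exact hj ((hmemC₂' j).mpr h1)
    have hsplit2 := det_split Z C₂' hsupp₂
    have hfilterC₂ : C₂.filter (fun x => ¬ x ∈ C₁) = C₂ :=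
      Finset.filter_true_of_mem (fun x hx hmem => (Finset.disjoint_left.mp hdisj) hmem hx)
    have hdvd2 : (d : ℤ) ∣ (Z.submatrix
        (Subtype.val : {x // x ∈ C₂'} → {x : Fin (n+1) // ¬ x ∈ C₁})
        Subtype.val).det := by
      apply dvd_det_of_row_sum _ d
      intro i
      show ∑ j : {x // x ∈ C₂'}, B i.1.1 j.1.1 = (d : ℤ)
      refine Eq.trans (Finset.sum_coe_sort C₂'
        (fun (j : {x : Fin (n+1) // ¬ x ∈ C₁}) => B i.1.1 j.1)) ?_
      have hCmap : C₂'.map (Function.Embedding.subtype _) = C₂ := by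
        rw [hC₂', Finset.subtype_map, hfilterC₂]
      have hmap : ∑ j ∈ C₂', B i.1.1 j.1 = ∑ j ∈ C₂, B i.1.1 j := by
        have h1 : ∑ j ∈ C₂'.map (Function.Embedding.subtype _), B i.1.1 j
            = ∑ j ∈ C₂', B i.1.1 j.1 := by
          rw [Finset.sum_map]
          rfl
        rw [← h1, hCmap]
      rw [hmap]
      have hinC₂ : i.1.1 ∈ C₂ := (hmemC₂' i.1).mp i.2
      rw [Finset.sum_subset (Finset.subset_univ C₂) (fun j _ hj => by
        apply hBsupp
        intro hmem
        exact hj (hC₂closed i.1.1 hinC₂ hmem))]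
      exact hBrowsum i.1.1
    apply key
    obtain ⟨y1, hy1⟩ := hdvd1
    obtain ⟨y2, hy2⟩ := hdvd2
    rw [hsplit1, hsplit2, hy1, hy2]
    exact ⟨y1 * (y2 * (Z.submatrix (Subtype.val : {x // ¬ x ∈ C₂'} →
      {x : Fin (n+1) // ¬ x ∈ C₁}) Subtype.val).det), by ring⟩
  · -- transversal case
    left
    set W : Finset (Fin (n+1)) := Finset.univ.erase u₀ with hW
    obtain ⟨I, hIW, hIcard, hIind⟩ := exists_indep f ρ W (fun v hv =>
      (hstep v (Finset.ne_of_mem_erase hv)).2.2)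
    refine ⟨Finset.univ \ I, ?_, ?_⟩
    · have h1 : W.card = n := by
        rw [hW, Finset.card_erase_of_mem (Finset.mem_univ _)]
        simp
      have h2 : (Finset.univ \ I).card = (n+1) - I.card := by
        rw [Finset.card_sdiff_of_subset (Finset.subset_univ I)]
        simp
      rw [h2]
      rw [h1] at hIcard
      omega
    · intro i
      by_contra hcon
      push_neg at hcon
      have hsub : S i ⊆ I := by
        intro j hj
        by_contra hnot
        exact (hmemS i j).mp hj
          (hcon j (Finset.mem_sdiff.mpr ⟨Finset.mem_univ _, hnot⟩))
      set v := (σ : Fin (n+1) → Fin (n+1)) i with hv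
      have hvS : v ∈ S i := by
        rw [hv, hσa]
        exact hfmem i
      have hsymm : σ.symm v = i := by
        rw [hv]
        exact σ.symm_apply_apply i
      have hFvSi : F v = S i := by
        show S (σ.symm v) = S i
        rw [hsymm]
      have hvI : v ∈ I := hsub hvS
      have hvne : v ≠ u₀ := Finset.ne_of_mem_erase (hIW hvI)
      have hfvF : f v ∈ F v := (hstep v hvne).1
      have hfvI : f v ∈ I := hsub (hFvSi ▸ hfvF)
      exact hIind v hvI hfvI

/-- Theorem 2 in terms of the defining monomials: with `A` as above (`row sums d ≥ 1`,
`d² ∤ det A`), there is a set `S` of at most `⌊n/2⌋ + 1` variables such that each monomial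
`f_i = ∏_j X_j ^ a_{ij}` lies in the ideal generated by `{X_j : j ∈ S}`. -/
theorem monomials_mem_small_linear_ideal (k : Type*) [Field k] (n d : ℕ)
    (hn : 1 ≤ n) (hd : 1 ≤ d)
    (A : Matrix (Fin (n + 1)) (Fin (n + 1)) ℕ)
    (hrow : ∀ i, ∑ j, A i j = d)
    (hdet : ¬ ((d : ℤ) ^ 2 ∣ (A.map (fun a => (a : ℤ))).det)) :
    ∃ S : Finset (Fin (n + 1)), S.card ≤ n / 2 + 1 ∧
      ∀ i, (∏ j, (MvPolynomial.X j : MvPolynomial (Fin (n + 1)) k) ^ A i j) ∈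
        Ideal.span {p : MvPolynomial (Fin (n + 1)) k | ∃ j ∈ S, p = MvPolynomial.X j} := by
  rcases core_dichotomy n d hd A hrow with ⟨T, hTcard, hTrans⟩ | hdvd
  · refine ⟨T, hTcard, ?_⟩
    intro i
    obtain ⟨j, hjT, hij⟩ := hTrans i
    obtain ⟨m, hm⟩ : ∃ m, A i j = m + 1 := ⟨A i j - 1, by omega⟩
    have hXmem : (MvPolynomial.X j : MvPolynomial (Fin (n+1)) k) ∈
        Ideal.span {p : MvPolynomial (Fin (n + 1)) k | ∃ j' ∈ T, p = MvPolynomial.X j'} :=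
      Ideal.subset_span ⟨j, hjT, rfl⟩
    have hfactor : (∏ j', (MvPolynomial.X j' : MvPolynomial (Fin (n + 1)) k) ^ A i j')
        = MvPolynomial.X j * (MvPolynomial.X j ^ m *
          ∏ j' ∈ Finset.univ.erase j,
            (MvPolynomial.X j' : MvPolynomial (Fin (n+1)) k) ^ A i j') := by
      rw [← Finset.mul_prod_erase Finset.univ _ (Finset.mem_univ j), hm, pow_succ']
      ring
    rw [hfactor]
    exact Ideal.mul_mem_right _ _ hXmem
  · exact absurd hdvd hdet
end

section
/- Let $n \ge 1$ and $d \ge 1$ be integers, and let $A = (a_{ij})_{0 \le i,j \le n}$ be an $(n+1)\times(n+1)$ matrix with nonnegative integer entries such that every row sums to $d$, such that $a_{ii} \ne 0$ for all $i$, and such that $d^2$ does not divide $\det(A)$. Then there exist an index $i_0 \in \{0,\dots,n\}$ and a function $\varphi : \{0,\dots,n\} \to \{0,\dots,n\}$ with $\varphi(i_0) = i_0$, such that $a_{x\,\varphi(x)} \ne 0$ for every $x$, and such that for every $x \in \{0,\dots,n\}$ there exists $k \ge 0$ with $\varphi^{k}(x) = i_0$. -/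
open Finset in
/-- Sum over a subtype equals full sum when the function vanishes off the predicate. -/
lemma aux_sum_subtype {ι : Type*} [Fintype ι] (p : ι → Prop) [DecidablePred p]
    (f : ι → ℤ) (h0 : ∀ j, ¬ p j → f j = 0) :
    ∑ j : {a // p a}, f j.1 = ∑ j, f j := by
  rw [← Finset.sum_subtype (Finset.univ.filter p) (by simp) f]
  exact (Finset.sum_subset (Finset.filter_subset _ _)
    (fun x _ hx => h0 x (fun hp => hx (Finset.mem_filter.mpr ⟨Finset.mem_univ x, hp⟩))))

/-- A square integer matrix all of whose rows sum to `d` has determinant divisible by `d`. -/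
lemma aux_det_dvd_of_row_sum {ι : Type*} [Fintype ι] [DecidableEq ι] [Nonempty ι]
    (d : ℤ) (M : Matrix ι ι ℤ) (h : ∀ i, ∑ j, M i j = d) : d ∣ M.det := by
  obtain ⟨j₀⟩ := (inferInstance : Nonempty ι)
  have h1 := Matrix.det_updateCol_sum M j₀ (fun _ => (1 : ℤ))
  simp only [one_smul, smul_eq_mul, one_mul] at h1
  have h2 : (fun k => ∑ i, M k i) = (d • fun _ => (1 : ℤ)) := by
    funext k
    simpa using h k
  rw [h2, Matrix.det_updateCol_smul] at h1
  exact ⟨_, h1.symm⟩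

/-- Block splitting: if the set `p` is closed under the nonzero-entry relation, the determinant
factors through the two diagonal blocks. -/
lemma aux_det_split {ι : Type*} [Fintype ι] [DecidableEq ι]
    (M : Matrix ι ι ℤ) (p : ι → Prop) [DecidablePred p]
    (hc : ∀ i j, p i → M i j ≠ 0 → p j) :
    M.det = (M.submatrix (Subtype.val : {a // p a} → ι) Subtype.val).det *
      (M.submatrix (Subtype.val : {a // ¬ p a} → ι) Subtype.val).det := by
  rw [← Matrix.det_submatrix_equiv_self (Equiv.sumCompl p) M]
  have hblock : M.submatrix (Equiv.sumCompl p) (Equiv.sumCompl p) =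
      Matrix.fromBlocks (M.submatrix Subtype.val Subtype.val) 0
        (M.submatrix Subtype.val Subtype.val) (M.submatrix Subtype.val Subtype.val) := by
    ext i j
    cases i with
    | inl i =>
      cases j with
      | inl j => simp [Equiv.sumCompl]
      | inr j =>
        simp only [Matrix.submatrix_apply, Equiv.sumCompl_apply_inl, Equiv.sumCompl_apply_inr,
          Matrix.fromBlocks_apply₁₂, Matrix.zero_apply]
        by_contra h
        exact j.2 (hc i.1 j.1 i.2 h)
    | inr i =>
      cases j with
      | inl j => simp [Equiv.sumCompl]
      | inr j => simp [Equiv.sumCompl]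
  rw [hblock, Matrix.det_fromBlocks_zero₁₂]

/-- If `q` is a nonempty closed set whose rows sum to `d`, then `d ∣ det M`. -/
lemma aux_det_dvd_of_closed {ι : Type*} [Fintype ι] [DecidableEq ι]
    (d : ℤ) (M : Matrix ι ι ℤ) (q : ι → Prop) [DecidablePred q]
    (hne : ∃ i, q i) (hc : ∀ i j, q i → M i j ≠ 0 → q j)
    (hrowq : ∀ i, q i → ∑ j, M i j = d) : d ∣ M.det := by
  rw [aux_det_split M q hc]
  apply Dvd.dvd.mul_right
  have : Nonempty {a // q a} := ⟨⟨hne.choose, hne.choose_spec⟩⟩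
  apply aux_det_dvd_of_row_sum d
  intro i
  have h0 : ∀ j, ¬ q j → M i.1 j = 0 := by
    intro j hj
    by_contra h
    exact hj (hc i.1 j i.2 h)
  calc ∑ j : {a // q a}, M i.1 j.1 = ∑ j, M i.1 j := aux_sum_subtype q _ h0
    _ = d := hrowq i.1 i.2

/-- Two disjoint nonempty closed sets with row sums `d` force `d² ∣ det M`. -/
lemma aux_det_sq_dvd {ι : Type*} [Fintype ι] [DecidableEq ι]
    (d : ℤ) (M : Matrix ι ι ℤ) (p q : ι → Prop) [DecidablePred p] [DecidablePred q]
    (hp : ∃ i, p i) (hq : ∃ i, q i) (hdisj : ∀ i, p i → q i → False)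
    (hcp : ∀ i j, p i → M i j ≠ 0 → p j) (hcq : ∀ i j, q i → M i j ≠ 0 → q j)
    (hrowp : ∀ i, p i → ∑ j, M i j = d) (hrowq : ∀ i, q i → ∑ j, M i j = d) :
    d ^ 2 ∣ M.det := by
  rw [aux_det_split M p hcp, sq]
  apply mul_dvd_mul
  · have : Nonempty {a // p a} := ⟨⟨hp.choose, hp.choose_spec⟩⟩
    apply aux_det_dvd_of_row_sum d
    intro i
    have h0 : ∀ j, ¬ p j → M i.1 j = 0 := by
      intro j hj; by_contra h; exact hj (hcp i.1 j i.2 h)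
    calc ∑ j : {a // p a}, M i.1 j.1 = ∑ j, M i.1 j := aux_sum_subtype p _ h0
      _ = d := hrowp i.1 i.2
  · apply aux_det_dvd_of_closed d _ (fun a : {x // ¬ p x} => q a.1)
    · obtain ⟨i, hi⟩ := hq
      exact ⟨⟨i, fun hpi => hdisj i hpi hi⟩, hi⟩
    · intro i j hi hij
      exact hcq i.1 j.1 hi hij
    · intro i hi
      have h0 : ∀ j, ¬ ¬ p j → M i.1 j = 0 := by
        intro j hj
        by_contra h
        exact hdisj j (not_not.mp hj) (hcq i.1 j hi h)
      calc ∑ j : {a // ¬ p a}, M i.1 j.1 = ∑ j, M i.1 j := aux_sum_subtype _ _ h0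
        _ = d := hrowq i.1 hi

/-- `k`-step reachability for a relation. -/
def auxStepsTo {α : Type*} (r : α → α → Prop) : ℕ → α → α → Prop
  | 0 => Eq
  | k + 1 => fun x y => ∃ z, r x z ∧ auxStepsTo r k z y

lemma aux_exists_steps {α : Type*} {r : α → α → Prop} {x y : α}
    (h : Relation.ReflTransGen r x y) : ∃ k, auxStepsTo r k x y := by
  induction h using Relation.ReflTransGen.head_induction_on with
  | refl => exact ⟨0, rfl⟩
  | head hxz _ ih =>
    obtain ⟨k, hk⟩ := ih
    exact ⟨k + 1, _, hxz, hk⟩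

/-- Graph-theoretic step of Theorem 2: with `A` as above, nonzero diagonal, row sums `d ≥ 1`,
`d² ∤ det A`, there are a vertex `i₀` and a function `φ` fixing `i₀`, with `A x (φ x) ≠ 0`
for all `x`, such that every vertex reaches `i₀` under iteration of `φ`. -/
theorem exists_acyclic_function (n d : ℕ) (hn : 1 ≤ n) (hd : 1 ≤ d)
    (A : Matrix (Fin (n + 1)) (Fin (n + 1)) ℕ)
    (hrow : ∀ i, ∑ j, A i j = d)
    (hdiag : ∀ i, A i i ≠ 0)
    (hdet : ¬ ((d : ℤ) ^ 2 ∣ (A.map (fun a => (a : ℤ))).det)) :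
    ∃ (i₀ : Fin (n + 1)) (φ : Fin (n + 1) → Fin (n + 1)),
      φ i₀ = i₀ ∧ (∀ x, A x (φ x) ≠ 0) ∧ ∀ x, ∃ k : ℕ, φ^[k] x = i₀ := by
  classical
  set r : Fin (n + 1) → Fin (n + 1) → Prop := fun i j => A i j ≠ 0 with hr
  set reach : Fin (n + 1) → Fin (n + 1) → Prop := Relation.ReflTransGen r with hreach
  set R : Fin (n + 1) → Finset (Fin (n + 1)) := fun x => Finset.univ.filter (reach x) with hR
  obtain ⟨i₀, -, hmin⟩ := Finset.exists_min_image Finset.univ (fun x => (R x).card)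
    ⟨0, Finset.mem_univ 0⟩
  have hmemR : ∀ x v, v ∈ R x ↔ reach x v := by intro x v; simp [hR]
  have hsub : ∀ x v, reach x v → R v ⊆ R x := by
    intro x v hxv w hw
    rw [hmemR] at hw ⊢
    exact hxv.trans hw
  have hback : ∀ v, reach i₀ v → reach v i₀ := by
    intro v hv
    have h2 : R v = R i₀ :=
      Finset.eq_of_subset_of_card_le (hsub _ _ hv) (hmin v (Finset.mem_univ v))
    have : i₀ ∈ R v := h2 ▸ ((hmemR i₀ i₀).mpr Relation.ReflTransGen.refl)
    exact (hmemR v i₀).mp this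
  -- cast facts
  have hmap : ∀ i j, (A.map (fun a => (a : ℤ))) i j ≠ 0 ↔ A i j ≠ 0 := by
    intro i j; simp [Matrix.map_apply]
  have hrowZ : ∀ i, ∑ j, (A.map (fun a => (a : ℤ))) i j = (d : ℤ) := by
    intro i
    simp only [Matrix.map_apply]
    rw [← Nat.cast_sum, hrow i]
  have hall : ∀ x, reach x i₀ := by
    by_contra h
    push_neg at h
    obtain ⟨x, hx⟩ := h
    apply hdet
    apply aux_det_sq_dvd (d : ℤ) _ (reach x) (reach i₀)
      ⟨x, Relation.ReflTransGen.refl⟩ ⟨i₀, Relation.ReflTransGen.refl⟩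
    · intro v h1 h2
      exact hx (h1.trans (hback v h2))
    · intro i j hi hij
      exact hi.tail ((hmap i j).mp hij)
    · intro i j hi hij
      exact hi.tail ((hmap i j).mp hij)
    · intro i _; exact hrowZ i
    · intro i _; exact hrowZ i
  -- construct φ
  have hsteps : ∀ x, ∃ k, auxStepsTo r k x i₀ := fun x => aux_exists_steps (hall x)
  set N : Fin (n + 1) → ℕ := fun x => Nat.find (hsteps x) with hN
  have hNspec : ∀ x, auxStepsTo r (N x) x i₀ := fun x => Nat.find_spec (hsteps x)
  have hstep : ∀ x, x ≠ i₀ → ∃ z, r x z ∧ N z < N x := by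
    intro x hx
    have hN0 : N x ≠ 0 := by
      intro h
      have := hNspec x
      rw [h] at this
      exact hx this
    obtain ⟨m, hm⟩ := Nat.exists_eq_succ_of_ne_zero hN0
    have hs := hNspec x
    rw [hm] at hs
    obtain ⟨z, hz, hz2⟩ := hs
    exact ⟨z, hz, lt_of_le_of_lt (Nat.find_le hz2) (hm ▸ Nat.lt_succ_self m)⟩
  set φ : Fin (n + 1) → Fin (n + 1) :=
    fun x => if hx : x = i₀ then i₀ else Classical.choose (hstep x hx) with hφ
  have hφeq : φ i₀ = i₀ := by simp [hφ]
  refine ⟨i₀, φ, hφeq, ?_, ?_⟩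
  · intro x
    by_cases hx : x = i₀
    · subst hx
      rw [hφeq]
      exact hdiag x
    · have := (Classical.choose_spec (hstep x hx)).1
      simpa [hφ, hx, hr] using this
  · intro x
    have key : ∀ m, ∀ x, N x = m → ∃ k : ℕ, φ^[k] x = i₀ := by
      intro m
      induction m using Nat.strong_induction_on with
      | _ m ih =>
        intro x hm
        by_cases hx : x = i₀
        · exact ⟨0, hx⟩
        · obtain ⟨hz, hlt⟩ := Classical.choose_spec (hstep x hx)
          have hφx : φ x = Classical.choose (hstep x hx) := by simp [hφ, hx]
          obtain ⟨k, hk⟩ := ih (N (φ x)) (by rw [hφx]; omega) (φ x) rfl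
          exact ⟨k + 1, by rw [Function.iterate_succ_apply, hk]⟩
    exact key (N x) x rfl
end

section
/- Let $n \ge 0$ and let $\varphi : \{0,1,\dots,n\} \to \{0,1,\dots,n\}$ be a function such that $\varphi(0) = 0$ and such that for every $x \in \{0,\dots,n\}$ there exists $k \ge 0$ with $\varphi^{k}(x) = 0$. Then there exists a subset $S \subseteq \{0,\dots,n\}$ with $0 \in S$ and $|S| \le \lfloor n/2 \rfloor + 1$ such that for every $x \in \{0,\dots,n\}$, either $x \in S$ or $\varphi(x) \in S$. -/
/-- Two-coloring step of Theorem 2: if `φ : {0,…,n} → {0,…,n}` fixes `0` and every point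
reaches `0` under iteration, then there is a set `S` containing `0`, of cardinality at most
`⌊n/2⌋ + 1`, such that every `x` satisfies `x ∈ S` or `φ x ∈ S`. -/
theorem exists_small_vertex_cover_of_rooted_forest (n : ℕ)
    (φ : Fin (n + 1) → Fin (n + 1)) (h0 : φ 0 = 0)
    (hreach : ∀ x, ∃ k : ℕ, φ^[k] x = 0) :
    ∃ S : Finset (Fin (n + 1)), 0 ∈ S ∧ S.card ≤ n / 2 + 1 ∧
      ∀ x, x ∈ S ∨ φ x ∈ S := by
  classical
  set D : Fin (n + 1) → ℕ := fun x => Nat.find (hreach x) with hD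
  have hD0 : D 0 = 0 := by
    simp [hD, Nat.find_eq_zero]
  have hspec : ∀ x, φ^[D x] x = 0 := fun x => Nat.find_spec (hreach x)
  have hstep : ∀ x, x ≠ 0 → D (φ x) + 1 = D x := by
    intro x hx
    have hne : D x ≠ 0 := by
      intro h
      exact hx (by simpa [h] using hspec x)
    have h1 : D (φ x) ≤ D x - 1 := by
      apply Nat.find_le
      have : φ^[D x - 1] (φ x) = φ^[D x - 1 + 1] x := by
        rw [Function.iterate_succ_apply]
      have h3 : D x - 1 + 1 = D x := by omega
      rw [this, h3]
      exact hspec x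
    have h2 : D x ≤ D (φ x) + 1 := by
      apply Nat.find_le
      rw [Function.iterate_succ_apply]
      exact hspec (φ x)
    omega
  have hflip : ∀ x, x ≠ 0 → (Even (D (φ x)) ↔ ¬ Even (D x)) := by
    intro x hx
    rw [← hstep x hx, Nat.even_add_one]; tauto
  set E : Finset (Fin (n + 1)) := Finset.univ.filter (fun x => Even (D x)) with hE
  set O : Finset (Fin (n + 1)) := Finset.univ.filter (fun x => ¬ Even (D x)) with hO
  have hcard : E.card + O.card = n + 1 := by
    rw [hE, hO, Finset.card_filter_add_card_filter_not]
    simp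
  have h0E : (0 : Fin (n + 1)) ∈ E := by simp [hE, hD0]
  by_cases hle : E.card ≤ O.card
  · refine ⟨E, h0E, by omega, ?_⟩
    intro x
    by_cases hev : Even (D x)
    · left; simp [hE, hev]
    · right
      have hx : x ≠ 0 := fun h => hev (by simp [h, hD0])
      have := (hflip x hx).2 hev
      exact Finset.mem_filter.mpr ⟨Finset.mem_univ _, this⟩
  · refine ⟨insert 0 O, Finset.mem_insert_self _ _, ?_, ?_⟩
    · have := Finset.card_insert_le (0 : Fin (n + 1)) O
      omega
    · intro x
      by_cases hev : Even (D x)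
      · by_cases hx : x = 0
        · left; simp [hx]
        · right
          have : ¬ Even (D (φ x)) := by
            rw [hflip x hx]; simp [hev]
          exact Finset.mem_insert_of_mem (Finset.mem_filter.mpr ⟨Finset.mem_univ _, this⟩)
      · left; exact Finset.mem_insert_of_mem (Finset.mem_filter.mpr ⟨Finset.mem_univ _, hev⟩)
end

section
/- Let $n \ge 3$, let $d \ge 2$ be an integer, and set $c = \lfloor n/2 \rfloor + 1$ (so $c \ge 2$). Let $a_0, a_1, \dots, a_n$ be positive real numbers with $a_0 = 1$ and $a_1 = d$, satisfying $a_i^2 \ge a_{i-1}a_{i+1}$ for all $1 \le i \le n-1$, and suppose $a_c \le d^c - 1$. Then for every integer $i$ with $c \le i \le n$, one has $a_i \le (1 - d^{-c})^{\frac{i-1}{c-1}}\, d^{\,i}$, where the exponent $\frac{i-1}{c-1}$ is a real power. -/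
/-!
Dividing by `dᵏ` turns `a` into a log-concave sequence `b` with `b₁ = 1` and `b_c ≤ 1 - d⁻ᶜ`.
Log-concavity makes the ratios `b_{k+1} / b_k` non-increasing, so with `ρ = b_c / b_{c-1}` the
sequence grows at least like `ρᵏ` before `c` and at most like `ρᵏ` after it; this yields
`b_i^(c-1) · b₁^(i-c) ≤ b_c^(i-1)`, and taking `(c-1)`-th roots gives the bound.
-/

def LogConcaveUpTo (n : ℕ) (a : ℕ → ℝ) : Prop :=
  ∀ k, k + 2 ≤ n → a k * a (k + 2) ≤ a (k + 1) ^ 2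

namespace LogConcaveUpTo

variable {n : ℕ} {a : ℕ → ℝ}

theorem mul_pow (h : LogConcaveUpTo n a) (r : ℝ) :
    LogConcaveUpTo n fun k ↦ a k * r ^ k := by
  intro k hk
  calc a k * r ^ k * (a (k + 2) * r ^ (k + 2)) = a k * a (k + 2) * (r ^ (k + 1)) ^ 2 := by ring
    _ ≤ a (k + 1) ^ 2 * (r ^ (k + 1)) ^ 2 := by gcongr; exact h k hk
    _ = (a (k + 1) * r ^ (k + 1)) ^ 2 := by ring

theorem antitoneOn_ratio (h : LogConcaveUpTo n a) (ha : ∀ k ≤ n, 0 < a k) :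
    AntitoneOn (fun k ↦ a (k + 1) / a k) (Set.Iio n) := by
  refine antitoneOn_of_add_one_le Set.ordConnected_Iio fun k _ _ hk ↦ ?_
  simp only [Set.mem_Iio] at hk
  rw [div_le_div_iff₀ (ha _ hk.le) (ha k (by omega)), ← sq, mul_comm]
  exact h k hk

theorem pow_mul_pow_le_pow (h : LogConcaveUpTo n a) (ha : ∀ k ≤ n, 0 < a k) {j c i : ℕ}
    (hjc : j ≤ c) (hci : c ≤ i) (hin : i ≤ n) :
    a i ^ (c - j) * a j ^ (i - c) ≤ a c ^ (i - j) := by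
  obtain rfl | hjc := hjc.eq_or_lt
  · simp
  set ρ := a c / a (c - 1)
  have hρ : 0 ≤ ρ := (div_pos (ha c (by omega)) (ha _ (by omega))).le
  have hgrowth : ρ ^ (c - j) * a j ≤ a c := by
    have := geom_le (u := fun k ↦ a (j + k)) hρ (c - j) fun k hk ↦ by
      rw [← le_div_iff₀ (ha _ (by omega))]
      have := h.antitoneOn_ratio ha (show j + k < n by omega) (show c - 1 < n by omega) (by omega)
      simpa [Nat.sub_add_cancel (by omega : 1 ≤ c), add_assoc] using this
    simpa [Nat.add_sub_of_le hjc.le] using this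
  have hdecay : a i ≤ ρ ^ (i - c) * a c := by
    have := le_geom (u := fun k ↦ a (c + k)) hρ (i - c) fun k hk ↦ by
      rw [← div_le_iff₀ (ha _ (by omega))]
      have := h.antitoneOn_ratio ha (show c - 1 < n by omega) (show c + k < n by omega) (by omega)
      simpa [Nat.sub_add_cancel (by omega : 1 ≤ c), add_assoc] using this
    simpa [Nat.add_sub_of_le hci] using this
  have hai := (ha i hin).le
  have haj := (ha j (by omega)).le
  have hac := (ha c (by omega)).le
  calc a i ^ (c - j) * a j ^ (i - c) ≤ (ρ ^ (i - c) * a c) ^ (c - j) * a j ^ (i - c) := by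
        gcongr
    _ = a c ^ (c - j) * (ρ ^ (c - j) * a j) ^ (i - c) := by ring
    _ ≤ a c ^ (c - j) * a c ^ (i - c) := by gcongr
    _ = a c ^ (i - j) := by rw [← pow_add]; congr 1; omega

end LogConcaveUpTo

theorem le_rpow_div_of_pow_le {x y : ℝ} {k m : ℕ} (hx : 0 ≤ x) (hy : 0 ≤ y) (hm : m ≠ 0)
    (h : x ^ m ≤ y ^ k) : x ≤ y ^ ((k : ℝ) / m) :=
  calc x = (x ^ m) ^ (m⁻¹ : ℝ) := (Real.pow_rpow_inv_natCast hx hm).symm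
    _ ≤ (y ^ k) ^ (m⁻¹ : ℝ) := by gcongr
    _ = y ^ ((k : ℝ) / m) := by rw [← Real.rpow_natCast, ← Real.rpow_mul hy, div_eq_mul_inv]

theorem degree_bound_of_log_concave_general (n d : ℕ) (hn : 3 ≤ n)
    (c : ℕ) (hc : c = n / 2 + 1) (a : ℕ → ℝ)
    (hpos : ∀ i ≤ n, 0 < a i) (h1 : a 1 = d)
    (hlc : ∀ i : ℕ, 1 ≤ i → i + 1 ≤ n → a (i - 1) * a (i + 1) ≤ a i ^ 2)
    (hac : a c ≤ (d : ℝ) ^ c - 1) :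
    ∀ i : ℕ, c ≤ i → i ≤ n →
      a i ≤ (1 - (d : ℝ) ^ (-(c : ℤ))) ^ (((i : ℝ) - 1) / ((c : ℝ) - 1)) * (d : ℝ) ^ i := by
  intro i hci hin
  have hd : (0 : ℝ) < d := h1 ▸ hpos 1 (by omega)
  set b : ℕ → ℝ := fun k ↦ a k * (d : ℝ)⁻¹ ^ k with hb
  have hb_lc : LogConcaveUpTo n b :=
    LogConcaveUpTo.mul_pow (fun k hk ↦ by simpa using hlc (k + 1) (by omega) (by omega)) _
  have hb_pos : ∀ k ≤ n, 0 < b k := fun k hk ↦ mul_pos (hpos k hk) (by positivity)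
  have hb1 : b 1 = 1 := by simp [hb, h1, hd.ne']
  have hbc : b c ≤ 1 - (d : ℝ) ^ (-(c : ℤ)) :=
    calc b c = a c / d ^ c := by simp [hb, div_eq_mul_inv]
      _ ≤ (d ^ c - 1) / d ^ c := by gcongr
      _ = 1 - (d : ℝ) ^ (-(c : ℤ)) := by rw [zpow_neg, zpow_natCast]; field_simp
  have hb_pow : b i ^ (c - 1) ≤ b c ^ (i - 1) := by
    simpa [hb1] using hb_lc.pow_mul_pow_le_pow hb_pos (by omega : 1 ≤ c) hci hin
  have hbi : b i ≤ (1 - (d : ℝ) ^ (-(c : ℤ))) ^ (((i : ℝ) - 1) / ((c : ℝ) - 1)) := by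
    have hb_c := (hb_pos c (by omega)).le
    have := le_rpow_div_of_pow_le (hb_pos i hin).le (hb_c.trans hbc) (by omega)
      (hb_pow.trans (pow_le_pow_left₀ hb_c hbc _))
    rwa [Nat.cast_sub (by omega), Nat.cast_sub (by omega), Nat.cast_one] at this
  calc a i = b i * d ^ i := by simp [hb, hd.ne']
    _ ≤ _ := by gcongr

/-- Numerical content of Proposition 3: let `n ≥ 3`, `d ≥ 2`, `c = ⌊n/2⌋ + 1`, and let
`a₀, …, aₙ` be positive reals with `a₀ = 1`, `a₁ = d`, log-concave, and `a_c ≤ d^c - 1`.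
Then for `c ≤ i ≤ n`, `aᵢ ≤ (1 - d^{-c})^{(i-1)/(c-1)} dⁱ`. -/
theorem degree_bound_of_log_concave (n d : ℕ) (hn : 3 ≤ n) (hd : 2 ≤ d)
    (c : ℕ) (hc : c = n / 2 + 1) (a : ℕ → ℝ)
    (hpos : ∀ i ≤ n, 0 < a i) (h0 : a 0 = 1) (h1 : a 1 = d)
    (hlc : ∀ i : ℕ, 1 ≤ i → i + 1 ≤ n → a (i - 1) * a (i + 1) ≤ a i ^ 2)
    (hac : a c ≤ (d : ℝ) ^ c - 1) :
    ∀ i : ℕ, c ≤ i → i ≤ n →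
      a i ≤ (1 - (d : ℝ) ^ (-(c : ℤ))) ^ (((i : ℝ) - 1) / ((c : ℝ) - 1)) * (d : ℝ) ^ i :=
  degree_bound_of_log_concave_general n d hn c hc a hpos h1 hlc hac
end

section
/- Let $n \ge 3$, let $d \ge 2$ be an integer, and set $c = \lfloor n/2 \rfloor + 1$. Let $a_0, a_1, \dots, a_n$ be positive real numbers with $a_0 = 1$, $a_1 = d$ and $a_n = 1$, satisfying $a_i^2 \ge a_{i-1}a_{i+1}$ for all $1 \le i \le n-1$, and suppose $a_c \le d^c - 1$. Then $a_{n-1} \le (1 - d^{-c})^{\frac{n-2}{c-1}}\, d^{\,n-1}$, where the exponent $\frac{n-2}{c-1}$ is a real power. -/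
/-- Inequality (8) of the paper: let `n ≥ 3`, `d ≥ 2`, `c = ⌊n/2⌋ + 1`, and let
`a₀, …, aₙ` be positive reals with `a₀ = 1`, `a₁ = d`, `aₙ = 1`, log-concave, and
`a_c ≤ d^c - 1`. Then `a_{n-1} ≤ (1 - d^{-c})^{(n-2)/(c-1)} d^{n-1}`. -/
theorem inverse_degree_bound_of_log_concave (n d : ℕ) (hn : 3 ≤ n) (hd : 2 ≤ d)
    (c : ℕ) (hc : c = n / 2 + 1) (a : ℕ → ℝ)
    (hpos : ∀ i ≤ n, 0 < a i) (h0 : a 0 = 1) (h1 : a 1 = d) (hnn : a n = 1)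
    (hlc : ∀ i : ℕ, 1 ≤ i → i + 1 ≤ n → a (i - 1) * a (i + 1) ≤ a i ^ 2)
    (hac : a c ≤ (d : ℝ) ^ c - 1) :
    a (n - 1) ≤
      (1 - (d : ℝ) ^ (-(c : ℤ))) ^ (((n : ℝ) - 2) / ((c : ℝ) - 1)) * (d : ℝ) ^ (n - 1) := by
  have hd1 : (1:ℝ) < (d:ℝ) := by exact_mod_cast Nat.lt_of_lt_of_le one_lt_two hd
  have hc2 : 2 ≤ c := by omega
  have hcn : c ≤ n - 1 := by omega
  set b : ℕ → ℝ := fun i => Real.log (a i) with hb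
  -- differences are decreasing
  have hΔ : ∀ i, 1 ≤ i → i + 1 ≤ n → b (i+1) - b i ≤ b i - b (i-1) := by
    intro i hi hin
    have p1 := hpos (i-1) (by omega)
    have p2 := hpos i (by omega)
    have p3 := hpos (i+1) (by omega)
    have h := Real.log_le_log (by positivity) (hlc i hi hin)
    rw [Real.log_mul (ne_of_gt p1) (ne_of_gt p3), Real.log_pow] at h
    simp only [hb]
    push_cast at h
    linarith
  have hmono : ∀ i j, 1 ≤ i → i ≤ j → j + 1 ≤ n →
      b (j+1) - b j ≤ b (i+1) - b i := by
    intro i j hi hij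
    induction j, hij using Nat.le_induction with
    | base => intro _; exact le_refl _
    | succ j hij ih =>
      intro hjn
      have h1 := hΔ (j+1) (by omega) (by omega)
      simp only [Nat.add_sub_cancel] at h1
      have h2 := ih (by omega)
      linarith
  have hB : ∀ m j, 1 ≤ m → m ≤ j → j + 1 ≤ n →
      (m:ℝ) * (b (j+1) - b j) ≤ b (m+1) - b 1 := by
    intro m j hm hmj hjn
    induction m, hm using Nat.le_induction with
    | base =>
      have := hmono 1 j (le_refl _) hmj hjn
      push_cast
      linarith
    | succ m hm ih =>
      have h2 := ih (by omega)
      have h3 := hmono (m+1) j (by omega) (by omega) hjn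
      push_cast
      push_cast at h2
      linarith
  have hC : ∀ j, c ≤ j → j ≤ n →
      ((c:ℝ) - 1) * (b j - b 1) ≤ ((j:ℝ) - 1) * (b c - b 1) := by
    intro j hcj
    induction j, hcj using Nat.le_induction with
    | base => intro _; exact le_refl _
    | succ j hcj ih =>
      intro hjn
      have h2 := ih (by omega)
      have h3 := hB (c-1) j (by omega) (by omega) (by omega)
      have hcc : c - 1 + 1 = c := by omega
      rw [hcc] at h3
      have hcast : ((c - 1 : ℕ) : ℝ) = (c:ℝ) - 1 := by
        push_cast [Nat.cast_sub (by omega : 1 ≤ c)]; ring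
      rw [hcast] at h3
      push_cast
      nlinarith
  -- main chord inequality at j = n - 1
  have hkey := hC (n-1) hcn (by omega)
  have hcast1 : ((n - 1 : ℕ) : ℝ) = (n:ℝ) - 1 := by
    push_cast [Nat.cast_sub (by omega : 1 ≤ n)]; ring
  rw [hcast1] at hkey
  -- bound on b c
  have hdcpos : (1:ℝ) < (d:ℝ) ^ c := one_lt_pow₀ hd1 (by omega)
  have hzero : (d:ℝ) ^ (-(c:ℤ)) = ((d:ℝ) ^ c)⁻¹ := by
    rw [zpow_neg, zpow_natCast]
  have hbase : (0:ℝ) < 1 - (d:ℝ) ^ (-(c:ℤ)) := by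
    rw [hzero]
    have : ((d:ℝ) ^ c)⁻¹ < 1 := inv_lt_one_of_one_lt₀ hdcpos
    linarith
  set L := Real.log (1 - (d:ℝ) ^ (-(c:ℤ))) with hL
  set ld := Real.log (d:ℝ) with hld
  have hfact : (d:ℝ) ^ c - 1 = (d:ℝ) ^ c * (1 - (d:ℝ) ^ (-(c:ℤ))) := by
    rw [hzero]
    field_simp
  have hbc : b c ≤ (c:ℝ) * ld + L := by
    have h := Real.log_le_log (hpos c (by omega)) hac
    rw [hfact, Real.log_mul (by positivity) (ne_of_gt hbase), Real.log_pow] at h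
    simpa [hb, hL, hld] using h
  have hb1 : b 1 = ld := by simp [hb, hld, h1]
  have hc1 : (0:ℝ) < (c:ℝ) - 1 := by
    have : (2:ℝ) ≤ (c:ℝ) := by exact_mod_cast hc2
    linarith
  have hn2 : (0:ℝ) ≤ (n:ℝ) - 2 := by
    have : (3:ℝ) ≤ (n:ℝ) := by exact_mod_cast hn
    linarith
  set e := ((n:ℝ) - 2) / ((c:ℝ) - 1) with he
  have hmain : b (n-1) ≤ L * e + ((n:ℝ) - 1) * ld := by
    have hBC : b c - b 1 ≤ ((c:ℝ) - 1) * ld + L := by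
      rw [hb1]; linarith
    have h4 : ((c:ℝ) - 1) * (b (n-1)) ≤
        ((c:ℝ) - 1) * ld + ((n:ℝ) - 2) * (((c:ℝ) - 1) * ld + L) := by
      have := mul_le_mul_of_nonneg_left hBC hn2
      rw [hb1] at hkey
      nlinarith
    have h5 : b (n-1) ≤ (((c:ℝ) - 1) * ld + ((n:ℝ) - 2) * (((c:ℝ) - 1) * ld + L)) / ((c:ℝ) - 1) := by
      rw [le_div_iff₀ hc1]
      linarith [h4]
    have h6 : (((c:ℝ) - 1) * ld + ((n:ℝ) - 2) * (((c:ℝ) - 1) * ld + L)) / ((c:ℝ) - 1)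
        = L * e + ((n:ℝ) - 1) * ld := by
      rw [he]; field_simp; ring
    linarith [h5, h6.le, h6.ge]
  -- exponentiate
  have hexp : a (n-1) = Real.exp (b (n-1)) := (Real.exp_log (hpos (n-1) (by omega))).symm
  have hrhs1 : (1 - (d : ℝ) ^ (-(c : ℤ))) ^ e = Real.exp (L * e) :=
    Real.rpow_def_of_pos hbase e
  have hrhs2 : (d:ℝ) ^ (n-1) = Real.exp (((n:ℝ) - 1) * ld) := by
    rw [← hcast1, hld, ← Real.log_pow, Real.exp_log (by positivity)]
  rw [hexp, hrhs1, hrhs2, ← Real.exp_add]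
  exact Real.exp_le_exp.mpr hmain
end
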